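/- Let K be an imaginary quadratic field and S a finite set of finite places lying over rational primes p_1,…,p_k. For any x, y, z ∈ O_{K,S}^× there exists a multi-index β ∈ {0,1,2,3,4}^k such that, writing p^β = ∏ p_i^{β_i}, one has v_𝔭(p^β x) ≠ 0 and v_𝔭(p^β z) ≠ v_𝔭(y) for every place 𝔭 ∈ S. -/

import Mathlib

/-!
At a place `𝔭 ∈ S` over the rational prime `q`, only the factors `q` of `p^β` change valuations.
Giving one index `i` with `p i = q` the exponent `t`, and every other such index the exponent `0`,
yields `v_𝔭(p^β w) = t · v_𝔭(q) + v_𝔭(w)` with `v_𝔭(q) ≠ 0`, so each of the two conditions at `𝔭`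
excludes at most one value of `t`. By the fundamental identity `∑ e f = [K : ℚ] = 2` there are at
most two places over `q`, so at most four of the five values `0, …, 4` are excluded.
-/

open IsDedekindDomain NumberField

/-- The normalized additive valuation at a finite place (`vval v x = v_𝔭(x)`). -/
noncomputable def vval {K : Type*} [Field K] [NumberField K] (v : HeightOneSpectrum (𝓞 K))
    (x : K) : ℤ :=
  if h : v.valuation K x = 0 then 0 else - Multiplicative.toAdd (WithZero.unzero h)

open Finset

lemma Ideal.natCast_mem_iff_of_comap_eq {R : Type*} [CommRing R] {P : Ideal R} {q : ℕ}
    (hP : P.comap (algebraMap ℤ R) = Ideal.span {(q : ℤ)}) (n : ℕ) :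
    (n : R) ∈ P ↔ q ∣ n := by
  rw [← Int.natCast_dvd_natCast, ← Ideal.mem_span_singleton, ← hP, Ideal.mem_comap,
    map_natCast]

namespace IsDedekindDomain.HeightOneSpectrum

lemma valuation_prod_natCast_pow {R : Type*} [CommRing R] [IsDedekindDomain R] {K : Type*}
    [Field K] [Algebra R K] [IsFractionRing R K] (v : HeightOneSpectrum R) {q : ℕ}
    (hv : v.asIdeal.comap (algebraMap ℤ R) = Ideal.span {(q : ℤ)}) {ι : Type*} {s : Finset ι}
    (n m : ι → ℕ) {j : ι} (hj : j ∈ s) (hs : ∀ i ∈ s, i ≠ j → ¬ q ∣ n i) :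
    v.valuation K (∏ i ∈ s, (n i : K) ^ m i) = v.valuation K ((n j : K) ^ m j) := by
  rw [map_prod]
  refine prod_eq_single_of_mem j hj fun i hi hij => ?_
  rw [map_pow, ← map_natCast (algebraMap R K), v.valuation_eq_one_iff_notMem.mpr
    ((Ideal.natCast_mem_iff_of_comap_eq hv _).not.mpr (hs i hi hij)), one_pow]

lemma card_le_finrank_of_comap_eq {K : Type*} [Field K] [NumberField K]
    (T : Finset (HeightOneSpectrum (𝓞 K))) {q : ℕ} (hq : q.Prime)
    (hT : ∀ v ∈ T, v.asIdeal.comap (algebraMap ℤ (𝓞 K)) = Ideal.span {(q : ℤ)}) :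
    #T ≤ Module.finrank ℚ K := by
  set p : Ideal ℤ := Ideal.span {(q : ℤ)}
  have : Fact q.Prime := ⟨hq⟩
  have : p.IsMaximal := Int.ideal_span_isMaximal_of_prime q
  calc #T = Fintype.card T := (Fintype.card_coe T).symm
    _ ≤ Fintype.card (p.primesOver (𝓞 K)) :=
        Fintype.card_le_of_injective (fun v => ⟨v.1.asIdeal, v.1.isPrime, ⟨(hT v v.2).symm⟩⟩)
          fun v w h => Subtype.ext (HeightOneSpectrum.ext (congrArg Subtype.val h))
    _ = ∑ _ : p.primesOver (𝓞 K), 1 := Fintype.card_eq_sum_ones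
    _ ≤ ∑ P : p.primesOver (𝓞 K), P.1.ramificationIdx ℤ * P.1.inertiaDeg ℤ :=
        sum_le_sum fun P _ =>
          Nat.mul_pos (Ideal.ramificationIdx_pos _ _) (Ideal.inertiaDeg_pos _ _)
    _ = Module.finrank ℚ K := by
        rw [Ideal.sum_ramification_inertia_eq_finrank, RingOfIntegers.rank]

end IsDedekindDomain.HeightOneSpectrum

lemma card_filter_mul_add_eq_le_one (s : Finset ℕ) {e : ℤ} (he : e ≠ 0) (a b : ℤ) :
    #{t ∈ s | ((t : ℕ) : ℤ) * e + a = b} ≤ 1 := by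
  refine card_le_one.mpr fun t₁ h₁ t₂ h₂ => ?_
  rw [mem_filter] at h₁ h₂
  have h : (t₁ : ℤ) * e = t₂ * e := add_right_cancel (h₁.2.trans h₂.2.symm)
  exact_mod_cast mul_right_cancel₀ he h

lemma exists_le_forall_mul_add_ne {ι : Type*} (T : Finset ι) (e a b c d : ι → ℤ)
    (he : ∀ i ∈ T, e i ≠ 0) :
    ∃ t : ℕ, t ≤ 2 * #T ∧ ∀ i ∈ T, (t : ℤ) * e i + a i ≠ b i ∧ (t : ℤ) * e i + c i ≠ d i := by
  classical
  set R := range (2 * #T + 1)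
  set bad := T.biUnion fun i =>
    {t ∈ R | ((t : ℕ) : ℤ) * e i + a i = b i} ∪ {t ∈ R | ((t : ℕ) : ℤ) * e i + c i = d i}
  have hbad : #bad < #R := by
    calc #bad ≤ #T * 2 := card_biUnion_le_card_mul _ _ _ fun i hi =>
          (card_union_le _ _).trans (add_le_add (card_filter_mul_add_eq_le_one R (he i hi) _ _)
            (card_filter_mul_add_eq_le_one R (he i hi) _ _))
      _ < #R := by rw [card_range]; omega
  obtain ⟨t, htR, htbad⟩ := exists_mem_notMem_of_card_lt_card hbad
  refine ⟨t, Nat.lt_succ_iff.mp (mem_range.mp htR), fun i hi => ?_⟩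
  simp only [bad, mem_biUnion, mem_union, mem_filter, not_exists, not_and] at htbad
  exact not_or.mp (htbad i hi ∘ Or.imp (⟨htR, ·⟩) (⟨htR, ·⟩))

section vval

variable {K : Type*} [Field K] [NumberField K] (v : HeightOneSpectrum (𝓞 K))

lemma vval_eq_neg_log (x : K) : vval v x = -WithZero.log (v.valuation K x) := by
  unfold vval
  split_ifs with h
  · simp [h]
  · rw [WithZero.toAdd_unzero_eq_log]

lemma vval_congr {a b : K} (h : v.valuation K a = v.valuation K b) : vval v a = vval v b := by
  rw [vval_eq_neg_log, vval_eq_neg_log, h]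

lemma vval_mul {a b : K} (ha : a ≠ 0) (hb : b ≠ 0) : vval v (a * b) = vval v a + vval v b := by
  rw [vval_eq_neg_log, vval_eq_neg_log, vval_eq_neg_log, map_mul,
    WithZero.log_mul ((Valuation.ne_zero_iff _).mpr ha) ((Valuation.ne_zero_iff _).mpr hb)]
  ring

lemma vval_pow (a : K) (n : ℕ) : vval v (a ^ n) = n * vval v a := by
  rw [vval_eq_neg_log, vval_eq_neg_log, map_pow, WithZero.log_pow, nsmul_eq_mul, mul_neg]

lemma vval_algebraMap_ne_zero_of_mem {a : 𝓞 K} (ha : a ≠ 0) (hmem : a ∈ v.asIdeal) :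
    vval v (algebraMap (𝓞 K) K a) ≠ 0 := by
  have hlt : v.valuation K (algebraMap (𝓞 K) K a) < 1 :=
    (v.valuation_lt_one_iff_mem a).mpr hmem
  have hne : v.valuation K (algebraMap (𝓞 K) K a) ≠ 0 := by simpa using ha
  rw [vval_eq_neg_log, neg_ne_zero]
  intro hlog
  rw [← WithZero.exp_log hne, hlog, WithZero.exp_zero] at hlt
  exact lt_irrefl _ hlt

lemma vval_prod_natCast_pow_mul {q : ℕ}
    (hv : v.asIdeal.comap (algebraMap ℤ (𝓞 K)) = Ideal.span {(q : ℤ)})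
    {ι : Type*} {s : Finset ι} {n : ι → ℕ} (hn : ∀ i ∈ s, n i ≠ 0) (m : ι → ℕ) {j : ι} (hj : j ∈ s)
    (hs : ∀ i ∈ s, i ≠ j → ¬ q ∣ n i) {w : K} (hw : w ≠ 0) :
    vval v ((∏ i ∈ s, (n i : K) ^ m i) * w) = m j * vval v (n j) + vval v w := by
  have hprod : ∏ i ∈ s, (n i : K) ^ m i ≠ 0 :=
    prod_ne_zero_iff.mpr fun i hi => pow_ne_zero _ (Nat.cast_ne_zero.mpr (hn i hi))
  rw [vval_mul v hprod hw, vval_congr v (v.valuation_prod_natCast_pow hv n m hj hs), vval_pow]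

lemma vval_natCast_ne_zero_of_comap_eq {q : ℕ} (hq : q ≠ 0)
    (hv : v.asIdeal.comap (algebraMap ℤ (𝓞 K)) = Ideal.span {(q : ℤ)}) :
    vval v (q : K) ≠ 0 := by
  simpa using vval_algebraMap_ne_zero_of_mem v (a := (q : 𝓞 K)) (Nat.cast_ne_zero.mpr hq)
    ((Ideal.natCast_mem_iff_of_comap_eq hv q).mpr dvd_rfl)

end vval

lemma exists_le_two_mul_finrank_forall_vval_add_ne {K : Type*} [Field K] [NumberField K]
    {S : Set (HeightOneSpectrum (𝓞 K))} (hS : S.Finite) {q : ℕ} (hq : q.Prime)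
    (a b c : HeightOneSpectrum (𝓞 K) → ℤ) :
    ∃ t : ℕ, t ≤ 2 * Module.finrank ℚ K ∧ ∀ v ∈ S,
      v.asIdeal.comap (algebraMap ℤ (𝓞 K)) = Ideal.span {(q : ℤ)} →
        (t : ℤ) * vval v (q : K) + a v ≠ 0 ∧ (t : ℤ) * vval v (q : K) + c v ≠ b v := by
  classical
  set T := {v ∈ hS.toFinset | v.asIdeal.comap (algebraMap ℤ (𝓞 K)) = Ideal.span {(q : ℤ)}}
  have hT : #T ≤ Module.finrank ℚ K :=
    HeightOneSpectrum.card_le_finrank_of_comap_eq T hq fun v hv => (mem_filter.mp hv).2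
  obtain ⟨t, ht, hgood⟩ := exists_le_forall_mul_add_ne T (fun v => vval v (q : K)) a 0 c b
    fun v hv => vval_natCast_ne_zero_of_comap_eq v hq.ne_zero (mem_filter.mp hv).2
  exact ⟨t, by omega, fun v hv hvq => hgood v (mem_filter.mpr ⟨hS.mem_toFinset.mpr hv, hvq⟩)⟩

theorem exists_multiindex_general {K : Type*} [Field K] [NumberField K]
    (hdeg : Module.finrank ℚ K = 2)
    (S : Set (HeightOneSpectrum (𝓞 K))) (hSfin : S.Finite)
    (k : ℕ) (p : Fin k → ℕ) (hprime : ∀ i, (p i).Prime)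
    (hbelow : ∀ v ∈ S, ∃ i, v.asIdeal.comap (algebraMap ℤ (𝓞 K)) = Ideal.span {(p i : ℤ)})
    (x y z : (S.integer K)ˣ) :
    ∃ β : Fin k → ℕ, (∀ i, β i ≤ 4) ∧
      ∀ v ∈ S,
        vval v ((∏ i, (p i : K) ^ (β i)) * ((x : S.integer K) : K)) ≠ 0 ∧
        vval v ((∏ i, (p i : K) ^ (β i)) * ((z : S.integer K) : K)) ≠
          vval v ((y : S.integer K) : K) := by
  classical
  have hx : ((x : S.integer K) : K) ≠ 0 := by simp
  have hz : ((z : S.integer K) : K) ≠ 0 := by simp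
  choose t ht hgood using fun i =>
    exists_le_two_mul_finrank_forall_vval_add_ne hSfin (hprime i)
    (fun v => vval v ((x : S.integer K) : K)) (fun v => vval v ((y : S.integer K) : K))
    (fun v => vval v ((z : S.integer K) : K))
  obtain ⟨u, -, hu_inj, hu_image⟩ :=
    exists_subset_injOn_image_eq_of_surjOn (f := p) Set.univ (univ.image p)
      fun _ hq => by simpa using hq
  refine ⟨fun i => if i ∈ u then t i else 0, fun i => ?_, fun v hv => ?_⟩
  · have hti : t i ≤ 4 := by simpa [hdeg] using ht i
    by_cases hi : i ∈ u <;> simp [hi, hti]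
  obtain ⟨i₀, hi₀⟩ := hbelow v hv
  obtain ⟨j, hju, hpj⟩ : ∃ j ∈ u, p j = p i₀ := by
    rw [← mem_image, hu_image]; exact mem_image_of_mem p (mem_univ i₀)
  have hvj : v.asIdeal.comap (algebraMap ℤ (𝓞 K)) = Ideal.span {(p j : ℤ)} := hpj ▸ hi₀
  have hprod : ∏ i, (p i : K) ^ (if i ∈ u then t i else 0) = ∏ i ∈ u, (p i : K) ^ t i := by
    simp only [pow_ite, pow_zero, prod_ite_mem, univ_inter]
  have hsep : ∀ i ∈ u, i ≠ j → ¬ p j ∣ p i := fun i hi hij hdvd =>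
    hij (hu_inj hi hju ((Nat.prime_dvd_prime_iff_eq (hprime j) (hprime i)).mp hdvd).symm)
  rw [hprod, vval_prod_natCast_pow_mul v hvj (fun i _ => (hprime i).ne_zero) t hju hsep hx,
    vval_prod_natCast_pow_mul v hvj (fun i _ => (hprime i).ne_zero) t hju hsep hz]
  exact hgood j v hv hvj

/-- let `S` be a finite set of finite places of an imaginary quadratic field `K`,
lying over the rational primes `p 0, …, p (k-1)`.  For all `S`-units `x, y, z` there is a
multi-index `β ∈ {0,…,4}^k` such that `v_𝔭(p^β x) ≠ 0` and `v_𝔭(p^β z) ≠ v_𝔭(y)` for all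
`𝔭 ∈ S`. -/
theorem exists_multiindex {K : Type*} [Field K] [NumberField K]
    (hdeg : Module.finrank ℚ K = 2) (himg : IsEmpty (K →+* ℝ))
    (S : Set (HeightOneSpectrum (𝓞 K))) (hSfin : S.Finite)
    (k : ℕ) (p : Fin k → ℕ) (hprime : ∀ i, (p i).Prime)
    (hbelow : ∀ v ∈ S, ∃ i, v.asIdeal.comap (algebraMap ℤ (𝓞 K)) = Ideal.span {(p i : ℤ)})
    (x y z : (S.integer K)ˣ) :
    ∃ β : Fin k → ℕ, (∀ i, β i ≤ 4) ∧
      ∀ v ∈ S,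
        vval v ((∏ i, (p i : K) ^ (β i)) * ((x : S.integer K) : K)) ≠ 0 ∧
        vval v ((∏ i, (p i : K) ^ (β i)) * ((z : S.integer K) : K)) ≠
          vval v ((y : S.integer K) : K) :=
  exists_multiindex_general hdeg S hSfin k p hprime hbelow x y z
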